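/- arXiv:2403.12476 — 4 statements merged into one kernel-verified Lean document; each statement's English description precedes it below -/
import Mathlib

section
/- Let 𝔬 be the ring of integers of a non-Archimedean local field F with uniformizer π. Let X and X' be n×n matrices over F which are the identity in the upper-left (n−2)×(n−2) block, have zero off-diagonal entries except the (n−1, n)-entry, with diagonal entries (1,…,1, π^{−l}, π^{−(b−l)}) and (1,…,1, π^{−l'}, π^{−(b−l')}) and (n−1,n)-entries π^{−l}x and π^{−l'}x' respectively. Then X'⁻¹X ∈ GL_n(𝔬) if and only if l = l' and x − x' ∈ 𝔬. -/
/-!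
`X'⁻¹ X` has the same shape as `X` and `X'`: its last two diagonal entries are `π^(l'-l)` and
`π^(l-l')`, and its corner entry is `π^(l'-l) x - π^(l-l') x'`. A matrix of this shape is in
`GL_n(𝔬)` exactly when its two diagonal entries are units of `𝔬` and its corner entry is
integral, and `π^k` is a unit of `𝔬` only for `k = 0`.
-/

open Matrix

/-- The `n×n` matrix which is the identity in the upper-left `(n−2)×(n−2)` block,
with last two diagonal entries `p`, `q`, `(n−1,n)`-entry `r`, and all other
entries zero. -/
def upperMat {F : Type*} [Field F] (n : ℕ) (p q r : F) :
    Matrix (Fin (n + 2)) (Fin (n + 2)) F := fun i j =>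
  if i = j then (if (i : ℕ) = n then p else if (i : ℕ) = n + 1 then q else 1)
  else if (i : ℕ) = n ∧ (j : ℕ) = n + 1 then r else 0

namespace Matrix

variable {m α : Type*} [Fintype m] [DecidableEq m] [NonUnitalNonAssocSemiring α]

theorem diagonal_mul_single (d : m → α) (i j : m) (c : α) :
    diagonal d * single i j c = single i j (d i * c) := by
  ext a b; by_cases ha : i = a <;> by_cases hb : j = b <;> simp [single, ha, hb]

theorem single_mul_diagonal (d : m → α) (i j : m) (c : α) :
    single i j c * diagonal d = single i j (c * d j) := by
  ext a b; by_cases ha : i = a <;> by_cases hb : j = b <;> simp [single, ha, hb]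

end Matrix

namespace upperMat

variable {F : Type*} [Field F] {n : ℕ}

def diag (n : ℕ) (p q : F) : Fin (n + 2) → F :=
  fun i => if (i : ℕ) = n then p else if (i : ℕ) = n + 1 then q else 1

theorem eq_diagonal_add_single (p q r : F) :
    upperMat n p q r =
      diagonal (diag n p q) + single (Fin.last n).castSucc (Fin.last (n + 1)) r := by
  ext i j
  by_cases h : i = j
  · subst h; simp [upperMat, diag, single, Fin.ext_iff]; omega
  · simp [upperMat, single, Fin.ext_iff, h, eq_comm]

theorem mul (p q r p' q' r' : F) :
    upperMat n p q r * upperMat n p' q' r' =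
      upperMat n (p * p') (q * q') (p * r' + r * q') := by
  have hne : (Fin.last (n + 1)) ≠ (Fin.last n).castSucc := by simp [Fin.ext_iff]
  simp only [eq_diagonal_add_single, add_mul, mul_add, diagonal_mul_diagonal, diagonal_mul_single,
    single_mul_diagonal, single_mul_single_of_ne _ _ _ _ hne, add_zero]
  rw [add_assoc, ← single_add]
  congr 1
  · congr 1
    funext i
    simp only [diag]
    split_ifs <;> simp
  · simp [diag, add_comm]

theorem one_one_zero : upperMat n (1 : F) 1 0 = 1 := by
  ext i j
  by_cases h : i = j <;> simp [upperMat, one_apply, h]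

theorem inv {p q : F} (r : F) (hp : p ≠ 0) (hq : q ≠ 0) :
    (upperMat n p q r)⁻¹ = upperMat n p⁻¹ q⁻¹ (-(p⁻¹ * r * q⁻¹)) := by
  refine inv_eq_right_inv ?_
  rw [mul, mul_inv_cancel₀ hp, mul_inv_cancel₀ hq, ← one_one_zero]
  congr 1
  field_simp
  ring

theorem inv_mul {p' q' : F} (p q r r' : F) (hp' : p' ≠ 0) (hq' : q' ≠ 0) :
    (upperMat n p' q' r')⁻¹ * upperMat n p q r =
      upperMat n (p'⁻¹ * p) (q'⁻¹ * q) (p'⁻¹ * r - p'⁻¹ * r' * (q'⁻¹ * q)) := by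
  rw [inv r' hp' hq', mul]
  congr 1
  ring

theorem entries_mem_iff (O : Subring F) (p q r : F) :
    (∀ i j, upperMat n p q r i j ∈ O) ↔ p ∈ O ∧ q ∈ O ∧ r ∈ O := by
  constructor
  · intro h
    refine ⟨?_, ?_, ?_⟩
    · simpa [upperMat] using h (Fin.last n).castSucc (Fin.last n).castSucc
    · simpa [upperMat] using h (Fin.last (n + 1)) (Fin.last (n + 1))
    · simpa [upperMat, Fin.ext_iff] using h (Fin.last n).castSucc (Fin.last (n + 1))
  · rintro ⟨hp, hq, hr⟩ i j
    unfold upperMat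
    split_ifs <;> first | assumption | exact O.one_mem | exact O.zero_mem

theorem entries_mem_and_inv_entries_mem_iff (O : Subring F) {p q : F} (r : F) (hp : p ≠ 0)
    (hq : q ≠ 0) :
    ((∀ i j, upperMat n p q r i j ∈ O) ∧ ∀ i j, (upperMat n p q r)⁻¹ i j ∈ O) ↔
      (p ∈ O ∧ p⁻¹ ∈ O) ∧ (q ∈ O ∧ q⁻¹ ∈ O) ∧ r ∈ O := by
  rw [inv r hp hq, entries_mem_iff, entries_mem_iff]
  constructor
  · rintro ⟨⟨hp, hq, hr⟩, hp', hq', -⟩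
    exact ⟨⟨hp, hp'⟩, ⟨hq, hq'⟩, hr⟩
  · rintro ⟨⟨hp, hp'⟩, ⟨hq, hq'⟩, hr⟩
    exact ⟨⟨hp, hq, hr⟩, hp', hq', O.neg_mem (O.mul_mem (O.mul_mem hp' hr) hq')⟩

end upperMat

theorem algebraMap_zpow_mem_range_iff {R K : Type*} [CommRing R] [Field K] [Algebra R K]
    (hinj : Function.Injective (algebraMap R K)) {π : R} (hπ : Irreducible π) (k : ℤ) :
    algebraMap R K π ^ k ∈ Set.range (algebraMap R K) ↔ 0 ≤ k := by
  refine ⟨fun ⟨u, hu⟩ => ?_, fun hk => ?_⟩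
  · by_contra! hk
    obtain ⟨m, rfl⟩ := Int.exists_eq_neg_ofNat hk.le
    have hm : m ≠ 0 := by omega
    have hπK : algebraMap R K π ≠ 0 :=
      (map_ne_zero_iff _ hinj).mpr hπ.ne_zero
    have hunit : π ^ m * u = 1 := hinj <| by
      rw [map_mul, hu, map_pow, map_one, _root_.zpow_neg, zpow_natCast,
        mul_inv_cancel₀ (pow_ne_zero _ hπK)]
    exact hπ.not_isUnit ((isUnit_pow_iff hm).mp (.of_mul_eq_one u hunit))
  · lift k to ℕ using hk
    exact ⟨π ^ k, by simp⟩

theorem stmt7_general {𝔬 : Type*} [CommRing 𝔬]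
    {F : Type*} [Field F] [Algebra 𝔬 F] [IsFractionRing 𝔬 F]
    (π : 𝔬) (hπ : Irreducible π) (πF : F) (hπF : πF = algebraMap 𝔬 F π)
    (O : Subring F) (hO : (O : Set F) = Set.range (algebraMap 𝔬 F))
    (n : ℕ) (b l l' : ℕ) (x x' : F)
    (X X' : Matrix (Fin (n + 2)) (Fin (n + 2)) F)
    (hX : X = upperMat n (πF ^ (-(l : ℤ))) (πF ^ (-((b : ℤ) - l))) (πF ^ (-(l : ℤ)) * x))
    (hX' : X' = upperMat n (πF ^ (-(l' : ℤ))) (πF ^ (-((b : ℤ) - l'))) (πF ^ (-(l' : ℤ)) * x')) :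
    ((∀ i j, (X'⁻¹ * X) i j ∈ O) ∧ (∀ i j, (X'⁻¹ * X)⁻¹ i j ∈ O))
      ↔ (l = l' ∧ x - x' ∈ O) := by
  have hinj := IsFractionRing.injective 𝔬 F
  have hπ0 : πF ≠ 0 := hπF ▸ (map_ne_zero_iff _ hinj).mpr hπ.ne_zero
  have hzpow_mem : ∀ k : ℤ, πF ^ k ∈ O ↔ 0 ≤ k := fun k => by
    rw [← SetLike.mem_coe, hO, hπF, algebraMap_zpow_mem_range_iff hinj hπ]
  have hratio : ∀ a c : ℤ, (πF ^ (-a))⁻¹ * πF ^ (-c) = πF ^ (a - c) := fun a c => by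
    rw [← _root_.zpow_neg, ← zpow_add₀ hπ0, neg_neg, sub_eq_add_neg]
  subst hX hX'
  rw [upperMat.inv_mul _ _ _ _ (zpow_ne_zero _ hπ0) (zpow_ne_zero _ hπ0), hratio, hratio,
    upperMat.entries_mem_and_inv_entries_mem_iff _ _ (zpow_ne_zero _ hπ0) (zpow_ne_zero _ hπ0),
    ← _root_.zpow_neg, hzpow_mem, hzpow_mem]
  constructor
  · rintro ⟨⟨hle, hge⟩, -, hr⟩
    obtain rfl : l = l' := by omega
    simpa [hπ0] using hr
  · rintro ⟨rfl, hxx⟩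
    simp [hπ0, hxx]

/-- with `X`, `X'` the matrices with diagonal
`(1,…,1,π^{−l},π^{−(b−l)})`, resp. `(1,…,1,π^{−l'},π^{−(b−l')})`, and
`(n−1,n)`-entries `π^{−l}x`, resp. `π^{−l'}x'`, one has `X'⁻¹X ∈ GL_n(𝔬)` if and
only if `l = l'` and `x − x' ∈ 𝔬`. -/
theorem stmt7 {𝔬 : Type*} [CommRing 𝔬] [IsDomain 𝔬] [IsDiscreteValuationRing 𝔬]
    {F : Type*} [Field F] [Algebra 𝔬 F] [IsFractionRing 𝔬 F]
    (π : 𝔬) (hπ : Irreducible π) (πF : F) (hπF : πF = algebraMap 𝔬 F π)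
    (O : Subring F) (hO : (O : Set F) = Set.range (algebraMap 𝔬 F))
    (n : ℕ) (b l l' : ℕ) (hl : l ≤ b) (hl' : l' ≤ b) (x x' : F)
    (X X' : Matrix (Fin (n + 2)) (Fin (n + 2)) F)
    (hX : X = upperMat n (πF ^ (-(l : ℤ))) (πF ^ (-((b : ℤ) - l))) (πF ^ (-(l : ℤ)) * x))
    (hX' : X' = upperMat n (πF ^ (-(l' : ℤ))) (πF ^ (-((b : ℤ) - l'))) (πF ^ (-(l' : ℤ)) * x')) :
    ((∀ i j, (X'⁻¹ * X) i j ∈ O) ∧ (∀ i j, (X'⁻¹ * X)⁻¹ i j ∈ O))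
      ↔ (l = l' ∧ x - x' ∈ O) :=
  stmt7_general π hπ πF hπF O hO n b l l' x x' X X' hX hX'
end

section
/- Let 𝔬 be the valuation ring of a local field F with uniformizer π, residue field κ of odd cardinality f. Let v₁, v₂ ∈ 𝔬×, and let d₁ ≤ d₂ be nonnegative integers. For an integer b with 0 ≤ b < d₁/2, the number of pairs (l, x̄) with 0 ≤ l ≤ b and x̄ ∈ F/𝔬 such that the matrix A (with A₁₁ = π^{d₁−2l}v₁, A₁₂ = π^{d₁−2l}v₁x, A₂₂ = π^{d₁−2l}v₁x² + π^{d₂−2(b−l)}v₂ for any lift x of x̄) has entries in 𝔬, π^{b−l}x ∈ 𝔬, and reduces to the zero matrix modulo π, equals 1 + f + f² + ⋯ + f^b. -/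
/-!
The conditions on the matrix `A` are automatic: once `π^{b-l} x ∈ 𝔬`, every entry of `A` is
`π` times an integer, because `2b < d₁ ≤ d₂`. So the count is `∑_{l ≤ b} #(π^{-(b-l)}𝔬 / 𝔬)`.
The group `π^{-k}𝔬 / 𝔬` is the `π^k`-torsion of `F / 𝔬`, isomorphic to `𝔬 / π^k` via
`r ↦ r / π^k`, and `#(𝔬 / π^k) = f^k` by induction on `k`.
-/

open Submodule in
theorem Ideal.natCard_quotient_span_mul {R : Type*} [CommRing R] [IsDomain R] {a : R}
    (ha : a ≠ 0) (b : R) :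
    Nat.card (R ⧸ Ideal.span {a * b}) =
      Nat.card (R ⧸ Ideal.span {a}) * Nat.card (R ⧸ Ideal.span {b}) := by
  set S : Ideal R := Ideal.span {a * b}
  set T : Ideal R := Ideal.span {a}
  let N : Submodule R (R ⧸ S) := Submodule.map S.mkQ T
  -- multiplication by `a` identifies `R ⧸ (b)` with `(a) ⧸ (a b)`
  let ψ : R →ₗ[R] R ⧸ S := LinearMap.toSpanSingleton R (R ⧸ S) (S.mkQ a)
  have hker : LinearMap.ker ψ = Ideal.span {b} := by
    ext r
    rw [LinearMap.mem_ker, LinearMap.toSpanSingleton_apply, ← map_smul, smul_eq_mul, mkQ_apply,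
      Quotient.mk_eq_zero, Ideal.mem_span_singleton, Ideal.mem_span_singleton, mul_comm r,
      mul_dvd_mul_iff_left ha]
  have hrange : LinearMap.range ψ = N := by
    rw [← LinearMap.span_singleton_eq_range, ← Set.image_singleton, ← Submodule.map_span]
  calc Nat.card (R ⧸ S)
      = Nat.card ((R ⧸ S) ⧸ N) * Nat.card N :=
        AddSubgroup.card_eq_card_quotient_mul_card_addSubgroup N.toAddSubgroup
    _ = Nat.card (R ⧸ T) * Nat.card (R ⧸ Ideal.span {b}) := by
        have hST : S ≤ T := Ideal.span_singleton_le_span_singleton.2 (dvd_mul_right a b)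
        rw [Nat.card_congr (quotientQuotientEquivQuotient S T hST).toEquiv, ← hrange, ← hker,
          Nat.card_congr ψ.quotKerEquivRange.toEquiv]

theorem Ideal.natCard_quotient_span_pow {R : Type*} [CommRing R] [IsDomain R] {a : R}
    (ha : a ≠ 0) (k : ℕ) :
    Nat.card (R ⧸ Ideal.span {a ^ k}) = Nat.card (R ⧸ Ideal.span {a}) ^ k := by
  induction k with
  | zero => simp
  | succ k ih => rw [pow_succ, natCard_quotient_span_mul (pow_ne_zero k ha), ih, pow_succ]

theorem Submodule.exists_mk_eq_and_algebraMap_mul_mem_iff {R A : Type*} [CommRing R] [Ring A]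
    [Algebra R A] (O : Submodule R A) (a : R) (y : A ⧸ O) :
    (∃ x : A, Quotient.mk x = y ∧ algebraMap R A a * x ∈ O) ↔ y ∈ torsionBy R (A ⧸ O) a := by
  have hmk (x : A) : Quotient.mk x ∈ torsionBy R (A ⧸ O) a ↔ algebraMap R A a * x ∈ O := by
    rw [mem_torsionBy_iff, ← Quotient.mk_smul, Quotient.mk_eq_zero, Algebra.smul_def]
  constructor
  · rintro ⟨x, rfl, hx⟩
    exact (hmk x).2 hx
  · obtain ⟨x, rfl⟩ := Quotient.mk_surjective O y
    exact fun h => ⟨x, rfl, (hmk x).1 h⟩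

open Submodule in
noncomputable def IsFractionRing.quotientSpanEquivTorsionBy {R K : Type*} [CommRing R] [Field K]
    [Algebra R K] [IsFractionRing R K] {a : R} (ha : a ≠ 0) :
    (R ⧸ Ideal.span {a}) ≃ₗ[R] torsionBy R (K ⧸ LinearMap.range (Algebra.linearMap R K)) a :=
  let O := LinearMap.range (Algebra.linearMap R K)
  let φ : R →ₗ[R] K ⧸ O := O.mkQ ∘ₗ LinearMap.toSpanSingleton R K (algebraMap R K a)⁻¹
  have ha' : algebraMap R K a ≠ 0 := (IsFractionRing.to_map_eq_zero_iff).not.2 ha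
  have hφ (r : R) : φ r = Submodule.Quotient.mk (algebraMap R K r / algebraMap R K a) := by
    simp [φ, Algebra.smul_def, div_eq_mul_inv]
  have hker : LinearMap.ker φ = Ideal.span {a} := by
    ext r
    rw [LinearMap.mem_ker, hφ, Quotient.mk_eq_zero, Ideal.mem_span_singleton']
    simp only [O, LinearMap.mem_range, Algebra.linearMap_apply, eq_div_iff ha', ← map_mul,
      (IsFractionRing.injective R K).eq_iff]
  have hrange : LinearMap.range φ = torsionBy R (K ⧸ O) a := by
    ext y
    rw [← exists_mk_eq_and_algebraMap_mul_mem_iff]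
    constructor
    · rintro ⟨r, rfl⟩
      exact ⟨_, (hφ r).symm, r, by rw [Algebra.linearMap_apply, mul_div_cancel₀ _ ha']⟩
    · rintro ⟨x, rfl, r, hr⟩
      rw [Algebra.linearMap_apply] at hr
      exact ⟨r, by rw [hφ, hr, mul_div_cancel_left₀ _ ha']⟩
  (quotEquivOfEq _ _ hker.symm).trans (φ.quotKerEquivRange.trans (LinearEquiv.ofEq _ _ hrange))

open Finset in
theorem Nat.card_subtype_fst_le_and {α : Type*} (b : ℕ) (P : ℕ → α → Prop)
    [∀ l, Finite {y // P l y}] :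
    Nat.card {p : ℕ × α // p.1 ≤ b ∧ P p.1 p.2} = ∑ l ∈ range (b + 1), Nat.card {y // P l y} := by
  let e : {p : ℕ × α // p.1 ≤ b ∧ P p.1 p.2} ≃ Σ l : Fin (b + 1), {y // P l y} :=
    { toFun p := ⟨⟨p.1.1, Nat.lt_succ_of_le p.2.1⟩, p.1.2, p.2.2⟩
      invFun q := ⟨(q.1, q.2.1), Nat.le_of_lt_succ q.1.2, q.2.2⟩
      left_inv _ := rfl
      right_inv _ := rfl }
  rw [Nat.card_congr e, Nat.card_sigma, Fin.sum_univ_eq_sum_range (fun l => Nat.card {y // P l y})]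

section
variable {R K : Type*} [CommRing R] [Field K] [Algebra R K]

theorem exists_zpow_mul_algebraMap_eq_algebraMap_mul (π r : R) {n : ℤ} (hn : 0 < n) :
    ∃ c : R, algebraMap R K π ^ n * algebraMap R K r = algebraMap R K (π * c) := by
  obtain ⟨m, rfl⟩ : ∃ m : ℕ, n = (m + 1 : ℕ) := ⟨n.toNat - 1, by omega⟩
  exact ⟨π ^ m * r, by rw [zpow_natCast]; simp only [map_mul, map_pow]; ring⟩

def matrixA (π v₁ v₂ x : K) (d₁ d₂ b l : ℕ) : Matrix (Fin 2) (Fin 2) K :=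
  !![π ^ ((d₁ : ℤ) - 2 * l) * v₁, π ^ ((d₁ : ℤ) - 2 * l) * v₁ * x;
     π ^ ((d₁ : ℤ) - 2 * l) * v₁ * x,
     π ^ ((d₁ : ℤ) - 2 * l) * v₁ * x ^ 2 + π ^ ((d₂ : ℤ) - 2 * ((b : ℤ) - l)) * v₂]

local notation "ι" => algebraMap R K

theorem exists_matrixA_eq_algebraMap_mul [IsFractionRing R K] {π : R} (hπ : π ≠ 0)
    (v₁ v₂ : R) {x : K} {d₁ d₂ b l : ℕ} (hb : 2 * b < d₁) (hd : d₁ ≤ d₂) (hl : l ≤ b)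
    (hx : ι π ^ ((b : ℤ) - l) * x ∈ LinearMap.range (Algebra.linearMap R K)) (i j : Fin 2) :
    ∃ c : R, matrixA (ι π) (ι v₁) (ι v₂) x d₁ d₂ b l i j = ι (π * c) := by
  have hπ' : ι π ≠ 0 := (IsFractionRing.to_map_eq_zero_iff).not.2 hπ
  obtain ⟨c₀, hc₀⟩ := hx
  rw [Algebra.linearMap_apply] at hc₀
  have h01 : ι π ^ ((d₁ : ℤ) - 2 * l) * ι v₁ * x = ι π ^ ((d₁ : ℤ) - l - b) * ι (v₁ * c₀) := by
    rw [map_mul, hc₀, show (d₁ : ℤ) - 2 * l = (d₁ - l - b) + (b - l) by ring, zpow_add₀ hπ']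
    ring
  have h11 : ι π ^ ((d₁ : ℤ) - 2 * l) * ι v₁ * x ^ 2
      = ι π ^ ((d₁ : ℤ) - 2 * b) * ι (v₁ * c₀ ^ 2) := by
    rw [map_mul, map_pow, hc₀,
      show (d₁ : ℤ) - 2 * l = (d₁ - 2 * b) + (b - l) + (b - l) by ring, zpow_add₀ hπ',
      zpow_add₀ hπ']
    ring
  fin_cases i <;> fin_cases j <;> dsimp [matrixA]
  · exact exists_zpow_mul_algebraMap_eq_algebraMap_mul π v₁ (by omega)
  · rw [h01]
    exact exists_zpow_mul_algebraMap_eq_algebraMap_mul π (v₁ * c₀) (by omega)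
  · rw [h01]
    exact exists_zpow_mul_algebraMap_eq_algebraMap_mul π (v₁ * c₀) (by omega)
  · obtain ⟨c, hc⟩ := exists_zpow_mul_algebraMap_eq_algebraMap_mul (K := K) π (v₁ * c₀ ^ 2)
      (n := (d₁ : ℤ) - 2 * b) (by omega)
    obtain ⟨c', hc'⟩ := exists_zpow_mul_algebraMap_eq_algebraMap_mul (K := K) π v₂
      (n := (d₂ : ℤ) - 2 * ((b : ℤ) - l)) (by omega)
    exact ⟨c + c', by rw [h11, hc, hc', mul_add, map_add]⟩
end

/-- for `0 ≤ b < d₁/2`, the number of pairs `(l, x̄)`, `0 ≤ l ≤ b`,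
`x̄ ∈ F/𝔬`, such that (for a lift `x` of `x̄`) `π^{b−l}x ∈ 𝔬` and the matrix
`A = (π^{d₁−2l}v₁, π^{d₁−2l}v₁x; ⋯ , π^{d₁−2l}v₁x² + π^{d₂−2(b−l)}v₂)` has entries
in `𝔬` reducing to `0` mod `π`, equals `1 + f + ⋯ + f^b`, where `f` is the (odd)
cardinality of the residue field. -/
theorem stmt10 {𝔬 : Type*} [CommRing 𝔬] [IsDomain 𝔬] [IsDiscreteValuationRing 𝔬]
    {F : Type*} [Field F] [Algebra 𝔬 F] [IsFractionRing 𝔬 F]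
    (π : 𝔬) (hπ : Irreducible π) (πF : F) (hπF : πF = algebraMap 𝔬 F π)
    (O : Submodule 𝔬 F) (hO : O = LinearMap.range (Algebra.linearMap 𝔬 F))
    (f : ℕ) (hf : Nat.card (IsLocalRing.ResidueField 𝔬) = f) (hodd : Odd f)
    (v₁ v₂ : 𝔬ˣ) (v₁F v₂F : F) (hv₁ : v₁F = algebraMap 𝔬 F (v₁ : 𝔬))
    (hv₂ : v₂F = algebraMap 𝔬 F (v₂ : 𝔬))
    (d₁ d₂ : ℕ) (hd : d₁ ≤ d₂) (b : ℕ) (hb : 2 * b < d₁) :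
    Nat.card {p : ℕ × (F ⧸ O) // p.1 ≤ b ∧ ∃ x : F,
        Submodule.Quotient.mk x = p.2 ∧
        πF ^ ((b : ℤ) - p.1) * x ∈ O ∧
        (∀ i j, (!![πF ^ ((d₁ : ℤ) - 2 * p.1) * v₁F,
                    πF ^ ((d₁ : ℤ) - 2 * p.1) * v₁F * x;
                    πF ^ ((d₁ : ℤ) - 2 * p.1) * v₁F * x,
                    πF ^ ((d₁ : ℤ) - 2 * p.1) * v₁F * x ^ 2
                      + πF ^ ((d₂ : ℤ) - 2 * ((b : ℤ) - p.1)) * v₂F] :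
            Matrix (Fin 2) (Fin 2) F) i j ∈ O) ∧
        (∀ i j, ∃ c : 𝔬, (!![πF ^ ((d₁ : ℤ) - 2 * p.1) * v₁F,
                    πF ^ ((d₁ : ℤ) - 2 * p.1) * v₁F * x;
                    πF ^ ((d₁ : ℤ) - 2 * p.1) * v₁F * x,
                    πF ^ ((d₁ : ℤ) - 2 * p.1) * v₁F * x ^ 2
                      + πF ^ ((d₂ : ℤ) - 2 * ((b : ℤ) - p.1)) * v₂F] :
            Matrix (Fin 2) (Fin 2) F) i j = algebraMap 𝔬 F (π * c))}
      = ∑ i ∈ Finset.range (b + 1), f ^ i := by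
  subst hπF hv₁ hv₂ hO
  set O := LinearMap.range (Algebra.linearMap 𝔬 F)
  have hres : Nat.card (𝔬 ⧸ Ideal.span {π}) = f := by rw [← hπ.maximalIdeal_eq]; exact hf
  have hcard (k : ℕ) : Nat.card (Submodule.torsionBy 𝔬 (F ⧸ O) (π ^ k)) = f ^ k := by
    rw [← Nat.card_congr
        (IsFractionRing.quotientSpanEquivTorsionBy (pow_ne_zero k hπ.ne_zero)).toEquiv,
      Ideal.natCard_quotient_span_pow hπ.ne_zero, hres]
  have (k : ℕ) : Finite (Submodule.torsionBy 𝔬 (F ⧸ O) (π ^ k)) :=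
    Nat.finite_of_card_ne_zero (by rw [hcard]; exact pow_ne_zero _ hodd.pos.ne')
  calc _ = Nat.card {p : ℕ × (F ⧸ O) //
        p.1 ≤ b ∧ p.2 ∈ Submodule.torsionBy 𝔬 (F ⧸ O) (π ^ (b - p.1))} := by
        refine Nat.card_congr (Equiv.subtypeEquivRight fun ⟨l, y⟩ => and_congr_right fun hl => ?_)
        have hzpow : algebraMap 𝔬 F π ^ ((b : ℤ) - l) = algebraMap 𝔬 F (π ^ (b - l)) := by
          rw [map_pow, ← zpow_natCast, Nat.cast_sub hl]
        rw [← Submodule.exists_mk_eq_and_algebraMap_mul_mem_iff, hzpow]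
        refine exists_congr fun x => and_congr_right fun _ => and_iff_left_of_imp fun hx => ?_
        -- `matrixA` unfolds to the matrix of the statement
        have hA := exists_matrixA_eq_algebraMap_mul hπ.ne_zero v₁ v₂ hb hd hl (hzpow ▸ hx)
        exact ⟨fun i j => (hA i j).elim fun c hc => ⟨π * c, hc.symm⟩, hA⟩
    _ = ∑ l ∈ Finset.range (b + 1), f ^ (b - l) :=
        (Nat.card_subtype_fst_le_and b _).trans (Finset.sum_congr rfl fun l _ => hcard (b - l))
    _ = ∑ i ∈ Finset.range (b + 1), f ^ i := Finset.sum_range_reflect (f ^ ·) (b + 1)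
end

section
/- Let 𝔬 be the valuation ring of a local field with uniformizer π and odd residue characteristic. Let v₁, v₂ ∈ 𝔬× and d₁ ≤ d₂ nonnegative integers with d₁ + d₂ even, and suppose −v₁v₂ is a square in 𝔬×. Fix w ∈ 𝔬× with v₁w² + v₂ = 0. Then for any integers b, l with 0 ≤ l < b − d₂/2, and x = w·∑_{i≥1} s_iπ^{−i} with digits s_i in a fixed set of representatives of κ containing 0, ±1 (almost all zero), the conditions π^{b−l}x ∈ 𝔬 and π^{d₁−2l}v₁x² + π^{d₂−2(b−l)}v₂ ∈ 𝔬 together are equivalent to: s_{(b−2l)−(d₂−d₁)/2} = ±1 and s_i = 0 for all i > (d₁+d₂)/2 − b with i ≠ (b−2l)−(d₂−d₁)/2. -/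
/-!
Clearing denominators, `π ^ N * x = w * A` with `A = ∑_{i ≤ N} s_i π^(N-i) ∈ 𝔬`, and since
`v₂ = -v₁ w²` the second condition becomes `π ^ (μ + q) ∣ (A - π ^ q) * (A + π ^ q)` with
`q = N - k < μ`. The two factors differ by `2 π ^ q` and `2` is a unit, so this happens exactly
when `π ^ μ` divides one of them, i.e. `A ≡ ±π ^ q` modulo `π ^ μ`. By uniqueness of digit
expansions this says that the digits of `x` beyond the threshold are `±1` at `k` and `0`
elsewhere; the first condition is then automatic.
-/

open Finset

section PrimePowers

variable {R : Type*} [CommRing R] [IsDomain R] {π : R}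

theorem Prime.pow_dvd_of_pow_add_dvd_mul (hπ : Prime π) {X Y : R} {j μ : ℕ}
    (hX : ¬ π ^ (j + 1) ∣ X) (h : π ^ (μ + j) ∣ X * Y) : π ^ μ ∣ Y := by
  rw [← emultiplicity_lt_iff_not_dvd, Nat.cast_add_one, ENat.lt_add_one_iff (by simp)] at hX
  rw [pow_dvd_iff_le_emultiplicity, emultiplicity_mul hπ, Nat.cast_add, add_comm] at h
  rw [pow_dvd_iff_le_emultiplicity]
  exact (ENat.add_le_add_iff_left (ENat.natCast_ne_top j)).mp (h.trans (add_le_add_left hX _))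

theorem pow_succ_dvd_mul_add_iff (hπ : Prime π) {c : R} (hc : π ∣ c → c = 0) (m : ℕ) (T : R) :
    π ^ (m + 1) ∣ π * T + c ↔ c = 0 ∧ π ^ m ∣ T := by
  constructor
  · intro h
    obtain rfl : c = 0 :=
      hc <| (dvd_add_right (dvd_mul_right π T)).mp ((dvd_pow_self π m.succ_ne_zero).trans h)
    rw [add_zero, pow_succ', mul_dvd_mul_iff_left hπ.ne_zero] at h
    exact ⟨rfl, h⟩
  · rintro ⟨rfl, h⟩
    rw [add_zero, pow_succ']
    exact mul_dvd_mul_left π h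

theorem pow_dvd_sum_mul_pow_sub_iff (hπ : Prime π) {c : ℕ → R} (hc : ∀ i, π ∣ c i → c i = 0)
    (N m : ℕ) :
    π ^ m ∣ ∑ i ∈ range (N + 1), c i * π ^ (N - i) ↔ ∀ i ≤ N, N < m + i → c i = 0 := by
  induction N generalizing m with
  | zero =>
    rcases m with _ | m
    · simp
    simp only [zero_add, range_one, sum_singleton, Nat.sub_self, pow_zero, mul_one]
    refine ⟨fun h i hi _ => ?_, fun h => by rw [h 0 le_rfl (by omega)]; exact dvd_zero _⟩
    obtain rfl : i = 0 := by omega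
    exact hc 0 ((dvd_pow_self π m.succ_ne_zero).trans h)
  | succ N ih =>
    have horner : ∑ i ∈ range (N + 1 + 1), c i * π ^ (N + 1 - i)
        = π * ∑ i ∈ range (N + 1), c i * π ^ (N - i) + c (N + 1) := by
      rw [sum_range_succ, mul_sum, Nat.sub_self, pow_zero, mul_one]
      congr 1
      refine sum_congr rfl fun i hi => ?_
      rw [Nat.sub_add_comm (Nat.lt_succ_iff.mp (mem_range.mp hi)), pow_succ]
      ring
    rcases m with _ | m
    · simp only [pow_zero, one_dvd, true_iff]
      omega
    rw [horner, pow_succ_dvd_mul_add_iff hπ (hc _), ih]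
    constructor
    · rintro ⟨hlast, h⟩ i hi hm
      rcases (show i ≤ N ∨ i = N + 1 by omega) with hi | rfl
      exacts [h i hi (by omega), hlast]
    · intro h
      exact ⟨h (N + 1) le_rfl (by omega), fun i hi hm => h i (by omega) (by omega)⟩

theorem pow_add_dvd_sub_mul_add_iff (hπ : Prime π) (h2 : ¬ π ∣ 2) {q μ : ℕ} (hqμ : q ≤ μ)
    (A : R) :
    π ^ (μ + q) ∣ (A - π ^ q) * (A + π ^ q) ↔ π ^ μ ∣ A - π ^ q ∨ π ^ μ ∣ A + π ^ q := by
  have hdiff : A + π ^ q - (A - π ^ q) = π ^ q * 2 := by ring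
  have hq : π ^ q ∣ π ^ μ := pow_dvd_pow π hqμ
  constructor
  · intro h
    -- The factors differ by `π ^ q * 2` and `π ∤ 2`, so `π ^ (q + 1)` cannot divide both.
    by_cases hX : π ^ (q + 1) ∣ A - π ^ q
    · rw [mul_comm] at h
      refine .inl (hπ.pow_dvd_of_pow_add_dvd_mul (j := q) (fun hY => h2 ?_) h)
      rw [← mul_dvd_mul_iff_left (pow_ne_zero q hπ.ne_zero), ← pow_succ, ← hdiff]
      exact dvd_sub hY hX
    · exact .inr (hπ.pow_dvd_of_pow_add_dvd_mul hX h)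
  · rintro (h | h)
    · rw [pow_add]
      refine mul_dvd_mul h ?_
      rw [show A + π ^ q = A - π ^ q + π ^ q * 2 by ring]
      exact dvd_add (hq.trans h) (dvd_mul_right _ _)
    · rw [pow_add, mul_comm (π ^ μ)]
      refine mul_dvd_mul ?_ h
      rw [show A - π ^ q = A + π ^ q - π ^ q * 2 by ring]
      exact dvd_sub (hq.trans h) (dvd_mul_right _ _)

end PrimePowers

section Digits

variable {R : Type*} [CommRing R] [IsDomain R] {π : R}

theorem pow_dvd_sub_mul_pow_iff_digit_eq (hπ : Prime π) {S : Set R}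
    (hS : ∀ c₁ ∈ S, ∀ c₂ ∈ S, π ∣ c₁ - c₂ → c₁ = c₂) (hS0 : 0 ∈ S) {s : ℕ → R}
    (hsS : ∀ i, s i ∈ S) {N k m : ℕ} (hs : ∀ i, N < i → s i = 0) (hk : k ≤ N)
    (hkm : N < m + k) {A : R} (hA : A = ∑ i ∈ range (N + 1), s i * π ^ (N - i)) {ε : R}
    (hε : ε ∈ S) :
    π ^ m ∣ A - ε * π ^ (N - k) ↔
      s k = ε ∧ ∀ i, N < m + i → i ≠ k → s i = 0 := by
  set t : ℕ → R := Pi.single k ε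
  have htS : ∀ i, t i ∈ S := fun i => by
    by_cases hik : i = k
    · subst hik; simpa [t] using hε
    · simpa [t, hik] using hS0
  have hsum : A - ε * π ^ (N - k) = ∑ i ∈ range (N + 1), (s i - t i) * π ^ (N - i) := by
    simp [hA, t, sub_mul, sum_sub_distrib, Pi.single_apply, ite_mul, hk]
  rw [hsum, pow_dvd_sum_mul_pow_sub_iff hπ fun i h => sub_eq_zero.mpr (hS _ (hsS i) _ (htS i) h)]
  constructor
  · intro h
    refine ⟨by simpa [t, sub_eq_zero] using h k hk hkm, fun i hi hik => ?_⟩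
    by_cases hiN : i ≤ N
    · simpa [t, hik, sub_eq_zero] using h i hiN hi
    · exact hs i (by omega)
  · rintro ⟨hsk, hz⟩ i - hi
    by_cases hik : i = k
    · subst hik; simp [t, hsk]
    · simp [t, hik, hz i hi hik]

theorem pow_dvd_and_pow_add_dvd_iff (hπ : Prime π) (h2 : ¬ π ∣ 2) {S : Set R}
    (hS : ∀ c₁ ∈ S, ∀ c₂ ∈ S, π ∣ c₁ - c₂ → c₁ = c₂) (hS0 : 0 ∈ S) (hS1 : 1 ∈ S)
    (hSm1 : -1 ∈ S) {s : ℕ → R} (hsS : ∀ i, s i ∈ S) {N k a μ : ℕ}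
    (hs : ∀ i, N < i → s i = 0) (ha : a + k ≤ N) (hkμ : N < μ + k) {A : R}
    (hA : A = ∑ i ∈ range (N + 1), s i * π ^ (N - i)) :
    (π ^ a ∣ A ∧ π ^ (μ + (N - k)) ∣ (A - π ^ (N - k)) * (A + π ^ (N - k))) ↔
      ((s k = 1 ∨ s k = -1) ∧ ∀ i, N < μ + i → i ≠ k → s i = 0) := by
  have digits := fun ε (hε : ε ∈ S) =>
    pow_dvd_sub_mul_pow_iff_digit_eq hπ hS hS0 hsS hs (by omega) hkμ hA hε
  have hsub : A - π ^ (N - k) = A - 1 * π ^ (N - k) := by ring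
  have hadd : A + π ^ (N - k) = A - (-1) * π ^ (N - k) := by ring
  have hdvdA : ∀ ε, π ^ μ ∣ A - ε * π ^ (N - k) → π ^ a ∣ A := fun ε h => by
    rw [show A = A - ε * π ^ (N - k) + ε * π ^ (N - k) by ring]
    exact dvd_add ((pow_dvd_pow π (by omega)).trans h)
      (dvd_mul_of_dvd_right (pow_dvd_pow π (by omega)) ε)
  rw [pow_add_dvd_sub_mul_add_iff hπ h2 (by omega), hsub, hadd, digits 1 hS1, digits (-1) hSm1]
  constructor
  · rintro ⟨-, ⟨h1, hz⟩ | ⟨h1, hz⟩⟩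
    exacts [⟨.inl h1, hz⟩, ⟨.inr h1, hz⟩]
  · rintro ⟨h1 | h1, hz⟩
    · exact ⟨hdvdA 1 ((digits 1 hS1).mpr ⟨h1, hz⟩), .inl ⟨h1, hz⟩⟩
    · exact ⟨hdvdA (-1) ((digits (-1) hSm1).mpr ⟨h1, hz⟩), .inr ⟨h1, hz⟩⟩

end Digits

section LocalRing

variable {R : Type*} [CommRing R] [IsLocalRing R] {π : R}

theorem IsLocalRing.not_dvd_two_of_ringChar_ne_two (hπ : ¬ IsUnit π)
    (h : ringChar (IsLocalRing.ResidueField R) ≠ 2) : ¬ π ∣ 2 := fun hdvd => by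
  apply Ring.two_ne_zero h
  rw [← map_ofNat (IsLocalRing.residue R) 2, IsLocalRing.residue_eq_zero_iff]
  exact Ideal.mem_of_dvd _ hdvd ((IsLocalRing.mem_maximalIdeal π).mpr hπ)

theorem IsLocalRing.eq_of_dvd_sub_of_residue_representatives {S : Set R}
    (hS : ∀ y, ∃! c, c ∈ S ∧ IsLocalRing.residue R c = IsLocalRing.residue R y)
    (hπ : ¬ IsUnit π) : ∀ c₁ ∈ S, ∀ c₂ ∈ S, π ∣ c₁ - c₂ → c₁ = c₂ := by
  intro c₁ h₁ c₂ h₂ hdvd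
  have hres : IsLocalRing.residue R c₁ = IsLocalRing.residue R c₂ := by
    rw [← sub_eq_zero, ← map_sub, IsLocalRing.residue_eq_zero_iff]
    exact Ideal.mem_of_dvd _ hdvd ((IsLocalRing.mem_maximalIdeal π).mpr hπ)
  exact (hS c₂).unique ⟨h₁, hres⟩ ⟨h₂, rfl⟩

end LocalRing

theorem zpow_mul_zpow_eq_pow {G : Type*} [GroupWithZero G] {p : G} (hp : p ≠ 0) {m n : ℤ}
    {k : ℕ} (h : m + n = k) : p ^ m * p ^ n = p ^ k := by
  rw [← zpow_add₀ hp, h, zpow_natCast]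

section FractionField

variable {R K : Type*} [CommRing R] [Field K] [Algebra R K] [IsFractionRing R K]

theorem mem_range_algebraMap_iff_pow_dvd {π a : R} (hπ : π ≠ 0) {z : K} {n : ℕ}
    (h : algebraMap R K π ^ n * z = algebraMap R K a) :
    z ∈ Set.range (algebraMap R K) ↔ π ^ n ∣ a := by
  have hinj := IsFractionRing.injective R K
  constructor
  · rintro ⟨c, rfl⟩
    exact ⟨c, hinj (by rw [← h, map_mul, map_pow])⟩
  · rintro ⟨c, rfl⟩
    refine ⟨c, mul_left_cancel₀ (pow_ne_zero n ((map_ne_zero_iff _ hinj).mpr hπ)) ?_⟩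
    rw [h, map_mul, map_pow]

theorem pow_mul_finsum_zpow_neg_eq {π : R} (hπ : π ≠ 0) {c : ℕ → R} {N : ℕ}
    (hc : ∀ i, N < i → c i = 0) :
    algebraMap R K π ^ N * ∑ᶠ i : ℕ, algebraMap R K (c i) * algebraMap R K π ^ (-(i : ℤ)) =
      algebraMap R K (∑ i ∈ range (N + 1), c i * π ^ (N - i)) := by
  have hp : algebraMap R K π ≠ 0 := (map_ne_zero_iff _ (IsFractionRing.injective R K)).mpr hπ
  rw [finsum_eq_sum_of_support_subset (s := range (N + 1)) _ ?_, mul_sum, map_sum]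
  · refine sum_congr rfl fun i hi => ?_
    have hiN := Nat.lt_succ_iff.mp (mem_range.mp hi)
    rw [map_mul, map_pow, mul_left_comm, ← zpow_natCast (algebraMap R K π) N,
      zpow_mul_zpow_eq_pow hp (k := N - i) (by omega)]
  · intro i hi
    by_contra hiN
    simp [hc i (by simpa using hiN)] at hi

end FractionField

theorem pow_mul_add_eq_mul_sub_mul_add {K : Type*} [Field K] {p f A v₁ v₂ w : K} (hp : p ≠ 0)
    {M N q : ℕ} {z₁ z₂ : ℤ} (h₁ : M + z₁ = (2 * N : ℕ)) (h₂ : M + z₂ = (2 * q : ℕ))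
    (hf : p ^ N * f = A) (hv : v₁ * w ^ 2 + v₂ = 0) :
    p ^ M * (p ^ z₁ * v₁ * (w * f) ^ 2 + p ^ z₂ * v₂) =
      v₁ * w ^ 2 * ((A - p ^ q) * (A + p ^ q)) := by
  have e₁ := zpow_mul_zpow_eq_pow hp h₁
  have e₂ := zpow_mul_zpow_eq_pow hp h₂
  rw [zpow_natCast] at e₁ e₂
  linear_combination v₁ * w ^ 2 * (f ^ 2 * e₁ + (p ^ N * f + A) * hf) + v₂ * e₂ + p ^ (2 * q) * hv

theorem stmt18_general {𝔬 : Type*} [CommRing 𝔬] [IsDomain 𝔬] [IsDiscreteValuationRing 𝔬]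
    {F : Type*} [Field F] [Algebra 𝔬 F] [IsFractionRing 𝔬 F]
    (π : 𝔬) (hπ : Irreducible π) (πF : F) (hπF : πF = algebraMap 𝔬 F π)
    (O : Subring F) (hO : (O : Set F) = Set.range (algebraMap 𝔬 F))
    (hchar : ringChar (IsLocalRing.ResidueField 𝔬) ≠ 2)
    (S : Set 𝔬) (hS0 : (0 : 𝔬) ∈ S) (hS1 : (1 : 𝔬) ∈ S) (hSm1 : (-1 : 𝔬) ∈ S)
    (hSrep : ∀ y : 𝔬, ∃! c : 𝔬, c ∈ S ∧
      IsLocalRing.residue 𝔬 c = IsLocalRing.residue 𝔬 y)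
    (v₁ v₂ w : 𝔬) (hv₁ : IsUnit v₁) (hw : IsUnit w)
    (hvw : v₁ * w ^ 2 + v₂ = 0)
    (d₁ d₂ b l : ℕ) (hd : d₁ ≤ d₂) (hpar : Even (d₁ + d₂))
    (hl : 2 * l + d₂ < 2 * b)
    (s : ℕ → 𝔬) (hsS : ∀ i, s i ∈ S) (hfin : (Function.support s).Finite)
    (x : F)
    (hx : x = algebraMap 𝔬 F w *
      ∑ᶠ i : ℕ, algebraMap 𝔬 F (s i) * πF ^ (-(i : ℤ)))
    (k : ℕ) (hk : (k : ℤ) = (b : ℤ) - 2 * l - ((d₂ : ℤ) - d₁) / 2) :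
    (πF ^ ((b : ℤ) - l) * x ∈ O ∧
      πF ^ ((d₁ : ℤ) - 2 * l) * algebraMap 𝔬 F v₁ * x ^ 2
        + πF ^ ((d₂ : ℤ) - 2 * ((b : ℤ) - l)) * algebraMap 𝔬 F v₂ ∈ O)
    ↔ ((s k = 1 ∨ s k = -1) ∧
        ∀ i : ℕ, ((d₁ : ℤ) + d₂) / 2 - b < (i : ℤ) → i ≠ k → s i = 0) := by
  subst hπF hx
  set p := algebraMap 𝔬 F π
  have hp0 : p ≠ 0 := (map_ne_zero_iff _ (IsFractionRing.injective 𝔬 F)).mpr hπ.ne_zero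
  obtain ⟨e, rfl⟩ : ∃ e, d₂ = d₁ + 2 * e := ⟨(d₂ - d₁) / 2, by obtain ⟨c, hc⟩ := hpar; omega⟩
  obtain ⟨N₀, hN₀⟩ := hfin.bddAbove
  set N := N₀ + 2 * b + k
  have hs : ∀ i, N < i → s i = 0 := fun i hi => by_contra fun h => absurd (hN₀ h) (by omega)
  set A := ∑ i ∈ range (N + 1), s i * π ^ (N - i) with hA
  have hxA := pow_mul_finsum_zpow_neg_eq (K := F) hπ.ne_zero hs
  have hvw' : algebraMap 𝔬 F v₁ * algebraMap 𝔬 F w ^ 2 + algebraMap 𝔬 F v₂ = 0 := by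
    rw [← map_pow, ← map_mul, ← map_add, hvw, map_zero]
  have hthreshold : ∀ i : ℕ, ((d₁ : ℤ) + ↑(d₁ + 2 * e)) / 2 - b < i ↔
      N < (N + 2 * l + k - d₁) + i := fun i => by omega
  -- In the notation of the header, `μ = N + 2l + k - d₁` and `q = N - k`.
  rw [← SetLike.mem_coe, hO, ← SetLike.mem_coe, hO,
    mem_range_algebraMap_iff_pow_dvd hπ.ne_zero (n := N + l - b) (a := w * A) ?powA,
    hw.dvd_mul_left,
    mem_range_algebraMap_iff_pow_dvd hπ.ne_zero (n := (N + 2 * l + k - d₁) + (N - k))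
      (a := v₁ * w ^ 2 * ((A - π ^ (N - k)) * (A + π ^ (N - k)))) ?powB,
    (hv₁.mul (hw.pow 2)).dvd_mul_left,
    pow_dvd_and_pow_add_dvd_iff hπ.prime
      (IsLocalRing.not_dvd_two_of_ringChar_ne_two hπ.not_isUnit hchar)
      (IsLocalRing.eq_of_dvd_sub_of_residue_representatives hSrep hπ.not_isUnit)
      hS0 hS1 hSm1 hsS hs (by omega) (by omega) hA]
  · simp only [hthreshold]
  case powA =>
    rw [← mul_assoc, ← zpow_natCast, zpow_mul_zpow_eq_pow hp0 (k := N) (by omega),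
      mul_left_comm, hxA, map_mul]
  case powB =>
    simp only [map_mul, map_pow, map_sub, map_add]
    exact pow_mul_add_eq_mul_sub_mul_add hp0 (by omega) (by omega) hxA hvw'

/-- with `−v₁v₂` a square, `v₁w² + v₂ = 0`, `0 ≤ l < b − d₂/2`, and
`x = w·∑_{i≥1} s_iπ^{−i}` a digit expansion with digits in a set `S` of residue
representatives containing `0, ±1`, the integrality conditions `π^{b−l}x ∈ 𝔬` and
`π^{d₁−2l}v₁x² + π^{d₂−2(b−l)}v₂ ∈ 𝔬` hold if and only if
`s_k = ±1` for `k = (b−2l)−(d₂−d₁)/2` and `s_i = 0` for all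
`i > (d₁+d₂)/2 − b` with `i ≠ k`. -/
theorem stmt18 {𝔬 : Type*} [CommRing 𝔬] [IsDomain 𝔬] [IsDiscreteValuationRing 𝔬]
    {F : Type*} [Field F] [Algebra 𝔬 F] [IsFractionRing 𝔬 F]
    (π : 𝔬) (hπ : Irreducible π) (πF : F) (hπF : πF = algebraMap 𝔬 F π)
    (O : Subring F) (hO : (O : Set F) = Set.range (algebraMap 𝔬 F))
    (hchar : ringChar (IsLocalRing.ResidueField 𝔬) ≠ 2)
    (S : Set 𝔬) (hS0 : (0 : 𝔬) ∈ S) (hS1 : (1 : 𝔬) ∈ S) (hSm1 : (-1 : 𝔬) ∈ S)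
    (hSrep : ∀ y : 𝔬, ∃! c : 𝔬, c ∈ S ∧
      IsLocalRing.residue 𝔬 c = IsLocalRing.residue 𝔬 y)
    (v₁ v₂ w : 𝔬) (hv₁ : IsUnit v₁) (hv₂ : IsUnit v₂) (hw : IsUnit w)
    (hvw : v₁ * w ^ 2 + v₂ = 0) (hsq : IsSquare (-(v₁ * v₂)))
    (d₁ d₂ b l : ℕ) (hd : d₁ ≤ d₂) (hpar : Even (d₁ + d₂))
    (hl : 2 * l + d₂ < 2 * b)
    (s : ℕ → 𝔬) (hsS : ∀ i, s i ∈ S) (hfin : (Function.support s).Finite)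
    (hs0 : s 0 = 0)
    (x : F)
    (hx : x = algebraMap 𝔬 F w *
      ∑ᶠ i : ℕ, algebraMap 𝔬 F (s i) * πF ^ (-(i : ℤ)))
    (k : ℕ) (hk : (k : ℤ) = (b : ℤ) - 2 * l - ((d₂ : ℤ) - d₁) / 2) :
    (πF ^ ((b : ℤ) - l) * x ∈ O ∧
      πF ^ ((d₁ : ℤ) - 2 * l) * algebraMap 𝔬 F v₁ * x ^ 2
        + πF ^ ((d₂ : ℤ) - 2 * ((b : ℤ) - l)) * algebraMap 𝔬 F v₂ ∈ O)
    ↔ ((s k = 1 ∨ s k = -1) ∧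
        ∀ i : ℕ, ((d₁ : ℤ) + d₂) / 2 - b < (i : ℤ) → i ≠ k → s i = 0) :=
  stmt18_general π hπ πF hπF O hO hchar S hS0 hS1 hSm1 hSrep v₁ v₂ w hv₁ hw hvw d₁ d₂ b l hd hpar hl
    s hsS hfin x hx k hk
end

section
/- Let L be a quadratic 𝔬-lattice of rank n, p odd, with Gram matrix diag(u₁,…,u_{n−2}, π^{d₁}v₁, π^{d₂}v₂), u_i, v_j ∈ 𝔬×, 0 ≤ d₁ ≤ d₂. For 0 ≤ b < d₁/2, the number of integral overlattices L' ⊇ L with [L':L] = b and with L'⊗κ having nondegenerate part of dimension exactly n−1 is zero; i.e. 𝒮_{(L,(n−1)^±,b)} = ∅ for b < d₁/2. -/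
/-!
Write `L' = X 𝔬ⁿ⁺²` and `M = X⁻¹`, which is integral. Since `det X = π^{-b}·unit`, the matrix
`Y = π^b X` is integral too, and `Yᵀ B Y = π^{2b} C`. The vectors `x` of `L'` (in the coordinates
of `X`) with `Y x` supported on the last two coordinates form a saturated submodule containing the
last two columns of `M`; by Smith normal form it contains two vectors that stay independent
modulo `π`. For such `x`, `B Y x` is divisible by `π^{d₁}`, so `C x ≡ 0 (mod π^{d₁ - 2b})`, and
`d₁ > 2b` puts both vectors in the kernel of `C mod π`, whose rank is therefore at most `n`.
-/

open Matrix

section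

variable {R : Type*} [CommRing R]

theorem Matrix.exists_map_eq_pow_smul_of_map_eq_inv {F ι : Type*} [Field F] [Fintype ι]
    [DecidableEq ι] {φ : R →+* F} (hφ : Function.Injective φ) {X : Matrix ι ι F}
    {M : Matrix ι ι R} (hM : M.map φ = X⁻¹) {π : R} (hπ : π ≠ 0) (w : Rˣ) (b : ℕ)
    (hdet : X.det = φ w * (φ π ^ b)⁻¹) :
    ∃ Y : Matrix ι ι R, Y.map φ = φ π ^ b • X ∧ Y * M = π ^ b • 1 := by
  have hπb : φ π ^ b ≠ 0 := pow_ne_zero b ((map_ne_zero_iff φ hφ).mpr hπ)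
  have hw : φ w ≠ 0 := (w.isUnit.map φ).ne_zero
  have hX : IsUnit X.det :=
    isUnit_iff_ne_zero.mpr (by rw [hdet]; exact mul_ne_zero hw (inv_ne_zero hπb))
  have hdetM : M.det = ↑w⁻¹ * π ^ b := by
    apply hφ
    rw [RingHom.map_det, RingHom.mapMatrix_apply, hM, det_nonsing_inv, hdet, Ring.inverse_eq_inv']
    simp [map_units_inv, mul_comm]
  have hYM : ((w : R) • M.adjugate) * M = π ^ b • 1 := by
    rw [smul_mul, adjugate_mul, hdetM, smul_smul, ← mul_assoc, Units.mul_inv, one_mul]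
  refine ⟨(w : R) • M.adjugate, ?_, hYM⟩
  calc ((w : R) • M.adjugate).map φ = (((w : R) • M.adjugate) * M).map φ * X := by
        rw [Matrix.map_mul, hM, Matrix.mul_assoc, nonsing_inv_mul X hX, Matrix.mul_one]
    _ = φ π ^ b • X := by
        rw [hYM, map_smul' _ _ _ (map_mul φ), Matrix.map_one _ (map_zero φ) (map_one φ), smul_mul,
          Matrix.one_mul, map_pow]

theorem Matrix.transpose_mul_mul_eq_sq_smul_of_map_eq {F ι : Type*} [Field F] [Fintype ι]
    {φ : R →+* F} (hφ : Function.Injective φ) {X B : Matrix ι ι F} {Y B₀ C : Matrix ι ι R}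
    {a : R} (hYX : Y.map φ = φ a • X) (hB : B₀.map φ = B) (hC : C.map φ = Xᵀ * B * X) :
    Yᵀ * B₀ * Y = a ^ 2 • C := by
  refine Matrix.map_injective hφ ?_
  dsimp only
  rw [Matrix.map_mul, Matrix.map_mul, transpose_map, hYX, hB, map_smul' _ _ _ (map_mul _), hC,
    transpose_smul, smul_mul, smul_mul, Matrix.mul_smul, smul_smul, map_pow, sq]

theorem Module.Basis.linearIndependent_ringHom_comp {S ι : Type*} [CommRing S] [Fintype ι]
    [DecidableEq ι] (b : Module.Basis ι R (ι → R)) (f : R →+* S) :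
    LinearIndependent S fun i => f ∘ b i := by
  let P := (Pi.basisFun R ι).toMatrix b
  have : Invertible P := (Pi.basisFun R ι).invertibleToMatrix b
  have hP : IsUnit (P.map f) := (isUnit_of_invertible P).map f.mapMatrix
  convert Matrix.linearIndependent_cols_of_isUnit hP using 1
  ext j i
  simp [P, Matrix.col, Module.Basis.toMatrix_apply]

theorem Submodule.exists_linearIndependent_ringHom_comp [IsDomain R] [IsPrincipalIdealRing R]
    {S ι : Type*} [CommRing S] [Fintype ι] [DecidableEq ι] (f : R →+* S)
    (K : Submodule R (ι → R)) (hK : ∀ (a : R) (x : ι → R), a ≠ 0 → a • x ∈ K → x ∈ K)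
    {k : ℕ} (v : Fin k → ι → R) (hv : LinearIndependent R v) (hvK : ∀ i, v i ∈ K) :
    ∃ e : Fin k → ι → R, (∀ i, e i ∈ K) ∧ LinearIndependent S fun i => f ∘ e i := by
  obtain ⟨r, bM, bN, emb, a, hsnf⟩ := K.smithNormalForm (Pi.basisFun R ι)
  have hkr : k ≤ r := by
    have hvK' : LinearIndependent R fun i => (⟨v i, hvK i⟩ : K) :=
      LinearIndependent.of_comp K.subtype hv
    simpa [Module.finrank_eq_card_basis bN] using hvK'.fintype_card_le_finrank
  -- saturation: the ambient basis vectors of the Smith normal form of `K` lie in `K` itself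
  have hmem : ∀ i, bM (emb i) ∈ K := by
    intro i
    refine hK (a i) _ (fun h => bN.ne_zero i ?_) (hsnf i ▸ (bN i).2)
    ext1
    simp [hsnf, h]
  exact ⟨fun i => bM (emb (Fin.castLE hkr i)), fun i => hmem _,
    (bM.linearIndependent_ringHom_comp f).comp _ (emb.injective.comp (Fin.castLE_injective hkr))⟩

theorem Matrix.exists_linearIndependent_ringHom_comp_of_mul_eq_smul [IsDomain R]
    [IsPrincipalIdealRing R] {S ι : Type*} [CommRing S] [Fintype ι] [DecidableEq ι] (f : R →+* S)
    {Y M : Matrix ι ι R} {a : R} (ha : a ≠ 0) (hYM : Y * M = a • 1) (s : Set ι) {k : ℕ}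
    {j : Fin k → ι} (hj : Function.Injective j) (hjs : ∀ l, j l ∉ s) :
    ∃ e : Fin k → ι → R,
      (∀ l, ∀ i ∈ s, (Y *ᵥ e l) i = 0) ∧ LinearIndependent S fun l => f ∘ e l := by
  let K := (Submodule.pi s fun _ => (⊥ : Submodule R R)).comap Y.mulVecLin
  have mem_K : ∀ x, x ∈ K ↔ ∀ i ∈ s, (Y *ᵥ x) i = 0 := by
    simp [K, Submodule.mem_pi]
  have hK : ∀ (b : R) x, b ≠ 0 → b • x ∈ K → x ∈ K := by
    simp only [mem_K, mulVec_smul, Pi.smul_apply, smul_eq_mul]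
    exact fun b x hb hx i hi => (mul_eq_zero.mp (hx i hi)).resolve_left hb
  have hdetM : M.det ≠ 0 := by
    have := congrArg det hYM
    rw [det_mul, det_smul, det_one, mul_one] at this
    exact right_ne_zero_of_mul (this ▸ pow_ne_zero _ ha)
  have hcols : ∀ l, M.col (j l) ∈ K := by
    intro l
    rw [mem_K]
    intro i hi
    change (Y * M) i (j l) = 0
    rw [hYM, Matrix.smul_apply, one_apply_ne (ne_of_mem_of_not_mem hi (hjs l)), smul_zero]
  obtain ⟨e, heK, he⟩ := K.exists_linearIndependent_ringHom_comp f hK _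
    ((linearIndependent_cols_of_det_ne_zero hdetM).comp j hj) hcols
  exact ⟨e, fun l => (mem_K _).mp (heK l), he⟩

theorem Matrix.rank_add_le_card_of_mulVec_eq_zero {K m n : Type*} [Field K] [Fintype m]
    [Fintype n] (A : Matrix m n K) {k : ℕ} (e : Fin k → n → K) (he : LinearIndependent K e)
    (hAe : ∀ i, A *ᵥ e i = 0) : A.rank + k ≤ Fintype.card n := by
  have hker : LinearIndependent K fun i => (⟨e i, hAe i⟩ : LinearMap.ker A.mulVecLin) :=
    LinearIndependent.of_comp (LinearMap.ker A.mulVecLin).subtype he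
  have := hker.fintype_card_le_finrank
  have := LinearMap.finrank_range_add_finrank_ker A.mulVecLin
  simp only [Fintype.card_fin, Module.finrank_fintype_fun_eq_card] at *
  rw [Matrix.rank]
  omega

theorem Matrix.map_mulVec_eq_zero_of_transpose_mul_diagonal_mul [IsDomain R] {S ι : Type*}
    [CommRing S] [Fintype ι] [DecidableEq ι] (f : R →+* S) {π : R} (hπ : π ≠ 0) (hfπ : f π = 0)
    {c d : ℕ} (hcd : c < d) {Y C : Matrix ι ι R} {g : ι → R}
    (hYC : Yᵀ * diagonal g * Y = π ^ c • C) {x : ι → R} (hx : ∀ i, π ^ d ∣ g i * (Y *ᵥ x) i) :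
    C.map f *ᵥ (f ∘ x) = 0 := by
  choose z hz using hx
  have hgY : diagonal g *ᵥ (Y *ᵥ x) = π ^ d • z := by
    ext i
    simp [mulVec_diagonal, hz]
  have hCx : π ^ c • (C *ᵥ x) = π ^ c • (π ^ (d - c) • (Yᵀ *ᵥ z)) := by
    rw [← smul_mulVec, ← hYC, ← mulVec_mulVec, ← mulVec_mulVec, hgY, mulVec_smul, smul_smul,
      ← pow_add, Nat.add_sub_cancel' hcd.le]
  ext i
  rw [← RingHom.map_mulVec, smul_right_injective _ (pow_ne_zero c hπ) hCx, Pi.smul_apply,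
    smul_eq_mul, map_mul, map_pow, hfπ, zero_pow (Nat.sub_ne_zero_of_lt hcd), zero_mul,
    Pi.zero_apply]

end

theorem stmt19_general {𝔬 : Type*} [CommRing 𝔬] [IsDomain 𝔬] [IsDiscreteValuationRing 𝔬]
    {F : Type*} [Field F] [Algebra 𝔬 F] [IsFractionRing 𝔬 F]
    (π : 𝔬) (hπ : Irreducible π) (πF : F) (hπF : πF = algebraMap 𝔬 F π)
    (O : Subring F) (hO : (O : Set F) = Set.range (algebraMap 𝔬 F))
    (n : ℕ) (u : Fin n → 𝔬ˣ) (v₁ v₂ : 𝔬ˣ)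
    (d₁ d₂ : ℕ) (hd : d₁ ≤ d₂) (b : ℕ) (hb : 2 * b < d₁)
    (B : Matrix (Fin (n + 2)) (Fin (n + 2)) F)
    (hB : B = Matrix.diagonal (fun i : Fin (n + 2) =>
      if h : (i : ℕ) < n then algebraMap 𝔬 F (u ⟨i, h⟩ : 𝔬)
      else if (i : ℕ) = n then πF ^ d₁ * algebraMap 𝔬 F (v₁ : 𝔬)
      else πF ^ d₂ * algebraMap 𝔬 F (v₂ : 𝔬))) :
    ¬ ∃ (X : Matrix (Fin (n + 2)) (Fin (n + 2)) F)
        (C : Matrix (Fin (n + 2)) (Fin (n + 2)) 𝔬),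
        (∀ i j, X⁻¹ i j ∈ O) ∧
        (∃ w : 𝔬ˣ, X.det = algebraMap 𝔬 F (w : 𝔬) * πF ^ (-(b : ℤ))) ∧
        C.map (algebraMap 𝔬 F) = X.transpose * B * X ∧
        (C.map (IsLocalRing.residue 𝔬)).rank = n + 1 := by
  rintro ⟨X, C, hXinv, ⟨w, hdet⟩, hC, hrank⟩
  have hφ : Function.Injective (algebraMap 𝔬 F) := IsFractionRing.injective 𝔬 F
  have hπ0 : π ≠ 0 := hπ.ne_zero
  obtain ⟨M, hM⟩ : ∃ M : Matrix (Fin (n + 2)) (Fin (n + 2)) 𝔬, M.map (algebraMap 𝔬 F) = X⁻¹ := by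
    choose M hM using fun i j => (hO ▸ hXinv i j : X⁻¹ i j ∈ Set.range (algebraMap 𝔬 F))
    exact ⟨M, Matrix.ext hM⟩
  obtain ⟨Y, hYX, hYM⟩ := exists_map_eq_pow_smul_of_map_eq_inv hφ hM hπ0 w b
    (by rw [hdet, ← hπF, _root_.zpow_neg, zpow_natCast])
  set g : Fin (n + 2) → 𝔬 := fun i => if h : (i : ℕ) < n then u ⟨i, h⟩
    else if (i : ℕ) = n then π ^ d₁ * v₁ else π ^ d₂ * v₂
  have hg : (diagonal g).map (algebraMap 𝔬 F) = B := by
    rw [hB, diagonal_map (map_zero _)]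
    congr 1
    ext i
    simp only [g]
    split_ifs <;> simp [hπF]
  have hYC : Yᵀ * diagonal g * Y = π ^ (2 * b) • C := by
    rw [pow_mul']
    exact transpose_mul_mul_eq_sq_smul_of_map_eq hφ (by rw [hYX, map_pow]) hg hC
  obtain ⟨e, heY, he⟩ := Y.exists_linearIndependent_ringHom_comp_of_mul_eq_smul
    (IsLocalRing.residue 𝔬) (pow_ne_zero b hπ0) hYM {i | (i : ℕ) < n}
    (Fin.natAdd_injective 2 n) (by simp)
  have hπres : IsLocalRing.residue 𝔬 π = 0 :=
    (IsLocalRing.residue_eq_zero_iff π).mpr ((IsLocalRing.mem_maximalIdeal π).mpr hπ.not_isUnit)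
  have hCe : ∀ l, C.map (IsLocalRing.residue 𝔬) *ᵥ (IsLocalRing.residue 𝔬 ∘ e l) = 0 := by
    refine fun l => map_mulVec_eq_zero_of_transpose_mul_diagonal_mul _ hπ0 hπres hb hYC fun i => ?_
    simp only [g]
    split_ifs with h₁ h₂
    · simp [heY l i h₁]
    · exact (dvd_mul_right _ _).mul_right _
    · exact ((pow_dvd_pow π hd).mul_right _).mul_right _
  have := (C.map (IsLocalRing.residue 𝔬)).rank_add_le_card_of_mulVec_eq_zero _ he hCe
  simp only [Fintype.card_fin] at this
  omega

/-- for `0 ≤ b < d₁/2` and `L` with Gram matrix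
`diag(u₁,…,u_{n−2},π^{d₁}v₁,π^{d₂}v₂)` (`p` odd), there is no integral overlattice
`L' ⊇ L` with `[L':L] = b` whose reduction `L'⊗κ` has nondegenerate part of
dimension exactly `n−1`; formalized via `L' = X·𝔬ⁿ`: there is no `X ∈ GL_n(F)` with
`X⁻¹` integral, `det X = (unit)·π^{−b}`, and `XᵀBX` equal to the image of a matrix
`C` over `𝔬` whose reduction modulo the maximal ideal has rank `n−1`. -/
theorem stmt19 {𝔬 : Type*} [CommRing 𝔬] [IsDomain 𝔬] [IsDiscreteValuationRing 𝔬]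
    {F : Type*} [Field F] [Algebra 𝔬 F] [IsFractionRing 𝔬 F]
    (π : 𝔬) (hπ : Irreducible π) (πF : F) (hπF : πF = algebraMap 𝔬 F π)
    (O : Subring F) (hO : (O : Set F) = Set.range (algebraMap 𝔬 F))
    (p : ℕ) (hp : p.Prime) (hp2 : p ≠ 2) [CharP (IsLocalRing.ResidueField 𝔬) p]
    (n : ℕ) (u : Fin n → 𝔬ˣ) (v₁ v₂ : 𝔬ˣ)
    (d₁ d₂ : ℕ) (hd : d₁ ≤ d₂) (b : ℕ) (hb : 2 * b < d₁)
    (B : Matrix (Fin (n + 2)) (Fin (n + 2)) F)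
    (hB : B = Matrix.diagonal (fun i : Fin (n + 2) =>
      if h : (i : ℕ) < n then algebraMap 𝔬 F (u ⟨i, h⟩ : 𝔬)
      else if (i : ℕ) = n then πF ^ d₁ * algebraMap 𝔬 F (v₁ : 𝔬)
      else πF ^ d₂ * algebraMap 𝔬 F (v₂ : 𝔬))) :
    ¬ ∃ (X : Matrix (Fin (n + 2)) (Fin (n + 2)) F)
        (C : Matrix (Fin (n + 2)) (Fin (n + 2)) 𝔬),
        (∀ i j, X⁻¹ i j ∈ O) ∧
        (∃ w : 𝔬ˣ, X.det = algebraMap 𝔬 F (w : 𝔬) * πF ^ (-(b : ℤ))) ∧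
        C.map (algebraMap 𝔬 F) = X.transpose * B * X ∧
        (C.map (IsLocalRing.residue 𝔬)).rank = n + 1 :=
  stmt19_general π hπ πF hπF O hO n u v₁ v₂ d₁ d₂ hd b hb B hB
end
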